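/- arXiv:2208.07431 — 7 statements merged into one kernel-verified Lean document; each statement's English description precedes it below -/
import Mathlib

section
/- Fix γ > 0. There exists a function f : ℝ → ℝ such that for all unit vectors u, v ∈ ℝ³, (u − v)ᵀ ((1 − γ)(u uᵀ + v vᵀ) + 2γ I₃)⁻¹ (u − v) = f(‖u − v‖), where ‖·‖ is the Euclidean norm on ℝ³. In particular, this Mahalanobis-type quadratic form depends on u and v only through their Euclidean distance. -/
/-!
For unit vectors `u`, `v` put `w = u - v`. Since `u ⬝ᵥ w = -(v ⬝ᵥ w) = ‖w‖² / 2`, the vector `w`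
is an eigenvector of `Σ(u) + Σ(v)` with eigenvalue `λ = (1 - γ) ‖w‖² / 2 + 2γ`. Each `Σ(x)` is
positive definite by Cauchy–Schwarz, so the sum is invertible and its inverse maps `w` to `λ⁻¹ w`.
Hence the quadratic form equals `‖w‖² / λ`, a function of `‖w‖` alone.
-/

open Matrix Real

noncomputable section

namespace Matrix

variable {n : Type*}

lemma sq_dotProduct_le_mul_dotProduct_self [Fintype n] (x y : n → ℝ) :
    (x ⬝ᵥ y) ^ 2 ≤ (x ⬝ᵥ x) * (y ⬝ᵥ y) := by
  have := real_inner_mul_inner_self_le (WithLp.toLp 2 x) (WithLp.toLp 2 y)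
  simp only [EuclideanSpace.inner_toLp_toLp, star_trivial, dotProduct_comm y x] at this
  rw [sq]
  linarith

lemma inv_mulVec_eq_inv_smul [Fintype n] [DecidableEq n] {K : Type*} [Field K]
    {A : Matrix n n K} (hA : IsUnit A.det) {c : K} {w : n → K} (h : A *ᵥ w = c • w) :
    A⁻¹ *ᵥ w = c⁻¹ • w := by
  have hw : w = c • (A⁻¹ *ᵥ w) := by
    rw [← mulVec_smul, ← h, mulVec_mulVec, nonsing_inv_mul A hA, one_mulVec]
  rcases eq_or_ne c 0 with rfl | hc
  · rw [zero_smul] at hw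
    rw [hw, mulVec_zero, smul_zero]
  · calc A⁻¹ *ᵥ w = c⁻¹ • c • (A⁻¹ *ᵥ w) := by rw [smul_smul, inv_mul_cancel₀ hc, one_smul]
      _ = c⁻¹ • w := by rw [← hw]

variable [DecidableEq n]

def anisotropy (γ : ℝ) (x : n → ℝ) : Matrix n n ℝ :=
  (1 - γ) • vecMulVec x x + γ • 1

lemma anisotropy_add_anisotropy (γ : ℝ) (u v : n → ℝ) :
    anisotropy γ u + anisotropy γ v
      = (1 - γ) • (vecMulVec u u + vecMulVec v v) + (2 * γ) • 1 := by
  simp only [anisotropy]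
  module

lemma isHermitian_anisotropy (γ : ℝ) (x : n → ℝ) : (anisotropy γ x).IsHermitian := by
  simp [IsHermitian, anisotropy]

variable [Fintype n]

lemma anisotropy_mulVec (γ : ℝ) (x y : n → ℝ) :
    anisotropy γ x *ᵥ y = ((1 - γ) * (x ⬝ᵥ y)) • x + γ • y := by
  rw [anisotropy, add_mulVec, smul_mulVec, smul_mulVec, vecMulVec_mulVec, one_mulVec,
    op_smul_eq_smul, smul_smul]

lemma posDef_anisotropy {γ : ℝ} (hγ : 0 < γ) {x : n → ℝ} (hx : x ⬝ᵥ x = 1) :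
    (anisotropy γ x).PosDef := by
  refine posDef_iff_dotProduct_mulVec.2 ⟨isHermitian_anisotropy γ x, fun y hy ↦ ?_⟩
  have hyy : 0 < y ⬝ᵥ y := by simpa using dotProduct_star_self_pos_iff.2 hy
  have hcs := sq_dotProduct_le_mul_dotProduct_self x y
  rw [hx, one_mul] at hcs
  rw [star_trivial, anisotropy_mulVec, dotProduct_add, dotProduct_smul, dotProduct_smul,
    smul_eq_mul, smul_eq_mul, dotProduct_comm y x]
  -- `(1 - γ) (x ⬝ᵥ y)² + γ (y ⬝ᵥ y) ≥ min 1 γ · (y ⬝ᵥ y)` since `(x ⬝ᵥ y)² ≤ y ⬝ᵥ y`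
  rcases le_or_gt γ 1 with h | h <;> nlinarith

lemma anisotropy_add_anisotropy_mulVec_sub {γ : ℝ} {u v : n → ℝ} (hu : u ⬝ᵥ u = 1)
    (hv : v ⬝ᵥ v = 1) :
    (anisotropy γ u + anisotropy γ v) *ᵥ (u - v)
      = ((1 - γ) * ((u - v) ⬝ᵥ (u - v)) / 2 + 2 * γ) • (u - v) := by
  have huv : (u - v) ⬝ᵥ (u - v) = 2 - 2 * (u ⬝ᵥ v) := by
    simp only [sub_dotProduct, dotProduct_sub, hu, hv, dotProduct_comm v u]
    ring
  rw [add_mulVec, anisotropy_mulVec, anisotropy_mulVec, huv]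
  simp only [dotProduct_sub, hu, hv, dotProduct_comm v u]
  module

end Matrix

lemma EuclideanSpace.norm_sq_eq_dotProduct {n : Type*} [Fintype n] (x : EuclideanSpace ℝ n) :
    ‖x‖ ^ 2 = x ⬝ᵥ x := by
  rw [← real_inner_self_eq_norm_sq, EuclideanSpace.inner_eq_star_dotProduct, star_trivial]

/-- For fixed γ > 0, the Mahalanobis-type quadratic form
(u − v)ᵀ ((1 − γ)(u uᵀ + v vᵀ) + 2γ I₃)⁻¹ (u − v) depends on the unit vectors u, v only
through their Euclidean distance ‖u − v‖. -/
theorem mahalanobis_isotropic (γ : ℝ) (hγ : 0 < γ) :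
    ∃ f : ℝ → ℝ, ∀ u v : EuclideanSpace ℝ (Fin 3), u ⬝ᵥ u = 1 → v ⬝ᵥ v = 1 →
      (u - v) ⬝ᵥ (((1 - γ) • (vecMulVec u u + vecMulVec v v)
          + (2 * γ) • (1 : Matrix (Fin 3) (Fin 3) ℝ))⁻¹).mulVec (u - v)
        = f ‖u - v‖ := by
  refine ⟨fun r ↦ r ^ 2 / ((1 - γ) * r ^ 2 / 2 + 2 * γ), fun u v hu hv ↦ ?_⟩
  have hdet : IsUnit (anisotropy γ u + anisotropy γ v).det :=
    ((posDef_anisotropy hγ hu).add (posDef_anisotropy hγ hv)).isUnit.map detMonoidHom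
  rw [← anisotropy_add_anisotropy, WithLp.ofLp_sub,
    inv_mulVec_eq_inv_smul hdet (anisotropy_add_anisotropy_mulVec_sub hu hv), dotProduct_smul,
    smul_eq_mul, ← WithLp.ofLp_sub 2 u v, ← EuclideanSpace.norm_sq_eq_dotProduct, inv_mul_eq_div]
end
end

section
/- For every γ > 0 and all unit vectors u, v ∈ ℝ³, det((1 − γ)(u uᵀ + v vᵀ) + 2γ I₃) = 2γ ((1 + γ)² − (1 − γ)² (uᵀv)²). -/
open Matrix Real

noncomputable section

/-- For γ > 0 and unit vectors u, v ∈ ℝ³,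
det((1 − γ)(u uᵀ + v vᵀ) + 2γ I₃) = 2γ ((1 + γ)² − (1 − γ)² (uᵀv)²). -/
theorem det_sum_isotropic_anisotropy (γ : ℝ) (hγ : 0 < γ) (u v : Fin 3 → ℝ)
    (hu : u ⬝ᵥ u = 1) (hv : v ⬝ᵥ v = 1) :
    ((1 - γ) • (vecMulVec u u + vecMulVec v v)
        + (2 * γ) • (1 : Matrix (Fin 3) (Fin 3) ℝ)).det
      = 2 * γ * ((1 + γ) ^ 2 - (1 - γ) ^ 2 * (u ⬝ᵥ v) ^ 2) := by
  simp only [dotProduct, Fin.sum_univ_three] at hu hv ⊢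
  simp [Matrix.det_fin_three, vecMulVec_apply, Matrix.one_apply]
  linear_combination
    ((1-γ)*(2*γ)^2 + (1-γ)^2*(2*γ)*(v 0 * v 0 + v 1 * v 1 + v 2 * v 2)) * hu
    + ((1-γ)*(2*γ)^2 + (1-γ)^2*(2*γ)) * hv
end
end

section
/- Fix γ > 0 and define Σ(x) = (1 − γ) x xᵀ + γ I₃ for unit vectors x ∈ ℝ³. Then for all unit vectors u, v ∈ ℝ³, the normalization term c(u, v) = det(Σ(u))^{1/4} det(Σ(v))^{1/4} det((Σ(u) + Σ(v))/2)^{−1/2} equals 2√γ · ((1 + γ)² − (1 − γ)² (uᵀv)²)^{−1/2}. In particular, c(u, v) depends on u and v only through uᵀv, equivalently only through the Euclidean distance ‖u − v‖. -/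
open Matrix Real

noncomputable section

/-- The isotropic anisotropy matrix Σ(x) = (1 − γ) x xᵀ + γ I₃. -/
def Sig (γ : ℝ) (x : Fin 3 → ℝ) : Matrix (Fin 3) (Fin 3) ℝ :=
  (1 - γ) • vecMulVec x x + γ • (1 : Matrix (Fin 3) (Fin 3) ℝ)

/-- For γ > 0 and unit vectors u, v ∈ ℝ³, the normalization term
c(u, v) = det(Σ(u))^{1/4} det(Σ(v))^{1/4} det((Σ(u) + Σ(v))/2)^{−1/2}
equals 2√γ ((1 + γ)² − (1 − γ)² (uᵀv)²)^{−1/2}; in particular it depends on u, v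
only through uᵀv. -/
theorem normalization_term_isotropic (γ : ℝ) (hγ : 0 < γ) (u v : Fin 3 → ℝ)
    (hu : u ⬝ᵥ u = 1) (hv : v ⬝ᵥ v = 1) :
    (Sig γ u).det ^ ((1 : ℝ) / 4) * (Sig γ v).det ^ ((1 : ℝ) / 4)
        * (((1 / 2 : ℝ) • (Sig γ u + Sig γ v)).det) ^ (-(1 : ℝ) / 2)
      = 2 * Real.sqrt γ * ((1 + γ) ^ 2 - (1 - γ) ^ 2 * (u ⬝ᵥ v) ^ 2) ^ (-(1 : ℝ) / 2) := by
  have hu' : u 0 ^ 2 + u 1 ^ 2 + u 2 ^ 2 = 1 := by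
    simpa [dotProduct, Fin.sum_univ_three, sq] using hu
  have hv' : v 0 ^ 2 + v 1 ^ 2 + v 2 ^ 2 = 1 := by
    simpa [dotProduct, Fin.sum_univ_three, sq] using hv
  have ht : u ⬝ᵥ v = u 0 * v 0 + u 1 * v 1 + u 2 * v 2 := by
    simp [dotProduct, Fin.sum_univ_three]
  set E : ℝ := (1 + γ) ^ 2 - (1 - γ) ^ 2 * (u ⬝ᵥ v) ^ 2 with hE
  have hdu : (Sig γ u).det = γ ^ 2 := by
    simp only [Sig, det_fin_three, Matrix.add_apply, Matrix.smul_apply, vecMulVec_apply,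
      Matrix.one_apply, smul_eq_mul, Fin.ext_iff]
    norm_num
    linear_combination (γ^2*(1-γ)) * hu'
  have hdv : (Sig γ v).det = γ ^ 2 := by
    simp only [Sig, det_fin_three, Matrix.add_apply, Matrix.smul_apply, vecMulVec_apply,
      Matrix.one_apply, smul_eq_mul, Fin.ext_iff]
    norm_num
    linear_combination (γ^2*(1-γ)) * hv'
  have hdm : (((1 / 2 : ℝ) • (Sig γ u + Sig γ v)).det) = γ / 4 * E := by
    rw [hE, ht]
    simp only [Sig, det_fin_three, Matrix.add_apply, Matrix.smul_apply, vecMulVec_apply,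
      Matrix.one_apply, smul_eq_mul, Fin.ext_iff]
    norm_num
    linear_combination (γ^2*((1-γ)/2) + γ*((1-γ)/2)^2*(v 0 ^ 2 + v 1 ^ 2 + v 2 ^ 2)) * hu'
      + (γ^2*((1-γ)/2) + γ*((1-γ)/2)^2) * hv'
  have htle : (u ⬝ᵥ v) ^ 2 ≤ 1 := by
    rw [ht]
    nlinarith [sq_nonneg (u 0 * v 1 - u 1 * v 0), sq_nonneg (u 0 * v 2 - u 2 * v 0),
      sq_nonneg (u 1 * v 2 - u 2 * v 1), hu', hv']
  have hEpos : 0 < E := by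
    rw [hE]; nlinarith [sq_nonneg (1 - γ)]
  rw [hdu, hdv, hdm]
  have h1 : (γ ^ 2 : ℝ) ^ ((1:ℝ)/4) = γ ^ ((1:ℝ)/2) := by
    rw [← Real.rpow_natCast γ 2, ← Real.rpow_mul hγ.le]; norm_num
  have h2 : (γ / 4 * E) ^ (-(1:ℝ)/2) = (γ/4) ^ (-(1:ℝ)/2) * E ^ (-(1:ℝ)/2) :=
    Real.mul_rpow (by positivity) hEpos.le
  have h3 : (γ/4 : ℝ) ^ (-(1:ℝ)/2) = γ ^ (-(1:ℝ)/2) * 2 := by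
    rw [Real.div_rpow hγ.le (by norm_num)]
    rw [show (-(1:ℝ)/2) = -(1/2 : ℝ) by norm_num, Real.rpow_neg (by norm_num : (0:ℝ) ≤ 4)]
    rw [show (4:ℝ) = 2^2 by norm_num, ← Real.rpow_natCast 2 2, ← Real.rpow_mul (by norm_num)]
    norm_num
    ring
  rw [h1, h2, h3]
  have h4 : γ ^ ((1:ℝ)/2) * γ ^ ((1:ℝ)/2) * (γ ^ (-(1:ℝ)/2)) = Real.sqrt γ := by
    rw [← Real.rpow_add hγ, ← Real.rpow_add hγ]
    norm_num [Real.sqrt_eq_rpow]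
  calc γ ^ ((1:ℝ)/2) * γ ^ ((1:ℝ)/2) * (γ ^ (-(1:ℝ)/2) * 2 * E ^ (-(1:ℝ)/2))
      = (γ ^ ((1:ℝ)/2) * γ ^ ((1:ℝ)/2) * γ ^ (-(1:ℝ)/2)) * 2 * E ^ (-(1:ℝ)/2) := by ring
    _ = 2 * Real.sqrt γ * E ^ (-(1:ℝ)/2) := by rw [h4]; ring
end
end

section
/- (Theorem 2, axial symmetry.) Let γ₁, γ₂ : [−π/2, π/2] → (0, ∞) be functions of latitude only, and for a point s = (l, L) of the unit sphere with longitude l and latitude L, define the anisotropy matrix Σ(s) = R_z(l) R_y(L) · diag(1, γ₁(L), γ₂(L)) · R_y(L)ᵀ R_z(l)ᵀ (i.e., the construction with rotation parameter κ ≡ 0). Let ρ : ℝ → ℝ be any function, and define ρ_NS(s_i, s_j) = c(s_i, s_j) · ρ(q(s_i, s_j)) with q(s_i, s_j) = (2 (s̃_i − s̃_j)ᵀ (Σ(s_i) + Σ(s_j))⁻¹ (s̃_i − s̃_j))^{1/2} and c(s_i, s_j) = det(Σ(s_i))^{1/4} det(Σ(s_j))^{1/4} det((Σ(s_i) + Σ(s_j))/2)^{−1/2}.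 Then ρ_NS is axially symmetric: there exists a function ρ_A : ℝ × ℝ × ℝ → ℝ such that ρ_NS(s_i, s_j) = ρ_A(l_i − l_j, L_i, L_j) for all points s_i = (l_i, L_i), s_j = (l_j, L_j) on the unit sphere. -/
open Matrix Real

noncomputable section

/-- Rotation matrix about the y-axis. -/
def Ry (θ : ℝ) : Matrix (Fin 3) (Fin 3) ℝ :=
  !![cos θ, 0, sin θ; 0, 1, 0; -sin θ, 0, cos θ]

/-- Rotation matrix about the z-axis. -/
def Rz (θ : ℝ) : Matrix (Fin 3) (Fin 3) ℝ :=
  !![cos θ, -sin θ, 0; sin θ, cos θ, 0; 0, 0, 1]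

/-- The diagonal matrix diag(a, b, c). -/
def Dg (a b c : ℝ) : Matrix (Fin 3) (Fin 3) ℝ := Matrix.diagonal ![a, b, c]

/-- Euclidean coordinates of the point with longitude l and latitude L on the unit sphere. -/
def sVec (l L : ℝ) : Fin 3 → ℝ := ![cos L * cos l, cos L * sin l, sin L]

/-- Anisotropy matrix with rotation parameter κ ≡ 0 and latitude-dependent scalings:
Σ(s) = R_z(l) R_y(L) diag(1, γ₁(L), γ₂(L)) R_y(L)ᵀ R_z(l)ᵀ. -/
def SigAx (γ₁ γ₂ : ℝ → ℝ) (l L : ℝ) : Matrix (Fin 3) (Fin 3) ℝ :=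
  Rz l * Ry L * Dg 1 (γ₁ L) (γ₂ L) * (Ry L)ᵀ * (Rz l)ᵀ

/-- The Mahalanobis distance q(s_i, s_j) = (2 (s̃_i − s̃_j)ᵀ (Σ(s_i)+Σ(s_j))⁻¹ (s̃_i − s̃_j))^{1/2}. -/
def qAx (γ₁ γ₂ : ℝ → ℝ) (l₁ L₁ l₂ L₂ : ℝ) : ℝ :=
  Real.sqrt (2 * ((sVec l₁ L₁ - sVec l₂ L₂) ⬝ᵥ
    ((SigAx γ₁ γ₂ l₁ L₁ + SigAx γ₁ γ₂ l₂ L₂)⁻¹).mulVec (sVec l₁ L₁ - sVec l₂ L₂)))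

/-- The normalization term c(s_i, s_j) = |Σ(s_i)|^{1/4} |Σ(s_j)|^{1/4} |(Σ(s_i)+Σ(s_j))/2|^{−1/2}. -/
def cAx (γ₁ γ₂ : ℝ → ℝ) (l₁ L₁ l₂ L₂ : ℝ) : ℝ :=
  (SigAx γ₁ γ₂ l₁ L₁).det ^ ((1 : ℝ) / 4) * (SigAx γ₁ γ₂ l₂ L₂).det ^ ((1 : ℝ) / 4)
    * (((1 / 2 : ℝ) • (SigAx γ₁ γ₂ l₁ L₁ + SigAx γ₁ γ₂ l₂ L₂)).det) ^ (-(1 : ℝ) / 2)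

lemma Rz_add (a b : ℝ) : Rz (a + b) = Rz a * Rz b := by
  ext i j
  fin_cases i <;> fin_cases j <;>
    simp [Rz, Matrix.mul_apply, Fin.sum_univ_three, cos_add, sin_add] <;> ring

lemma Rz_transpose (a : ℝ) : (Rz a)ᵀ = Rz (-a) := by
  ext i j
  fin_cases i <;> fin_cases j <;>
    simp [Rz, Matrix.transpose_apply]

lemma Rz_zero : Rz 0 = 1 := by
  ext i j
  fin_cases i <;> fin_cases j <;> simp [Rz, Matrix.one_apply, Matrix.vecHead, Matrix.vecTail]

lemma Rz_mul_transpose (a : ℝ) : Rz a * (Rz a)ᵀ = 1 := by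
  rw [Rz_transpose, ← Rz_add]
  simp [Rz_zero]

lemma Rz_transpose_mul (a : ℝ) : (Rz a)ᵀ * Rz a = 1 := by
  rw [Rz_transpose, ← Rz_add]
  simp [Rz_zero]

lemma Rz_mulVec_sVec (a l L : ℝ) : (Rz a) *ᵥ sVec l L = sVec (l + a) L := by
  funext i
  fin_cases i <;>
    simp [Rz, sVec, Matrix.mulVec, dotProduct, Fin.sum_univ_three, cos_add, sin_add] <;>
    ring

lemma SigAx_conj (γ₁ γ₂ : ℝ → ℝ) (a l L : ℝ) :
    SigAx γ₁ γ₂ l L = Rz a * SigAx γ₁ γ₂ (l - a) L * (Rz a)ᵀ := by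
  have h : Rz l = Rz a * Rz (l - a) := by rw [← Rz_add]; ring_nf
  simp only [SigAx, h, Matrix.transpose_mul]
  noncomm_ring

lemma conjInv3 (R M : Matrix (Fin 3) (Fin 3) ℝ) (hR : R * Rᵀ = 1) (hR' : Rᵀ * R = 1) :
    (R * M * Rᵀ)⁻¹ = R * M⁻¹ * Rᵀ := by
  rw [Matrix.mul_inv_rev, Matrix.mul_inv_rev,
    Matrix.inv_eq_right_inv hR, Matrix.inv_eq_right_inv hR', mul_assoc]

lemma conj_quad (R M : Matrix (Fin 3) (Fin 3) ℝ) (v : Fin 3 → ℝ) (hR' : Rᵀ * R = 1) :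
    (R *ᵥ v) ⬝ᵥ (R * M * Rᵀ) *ᵥ (R *ᵥ v) = v ⬝ᵥ M *ᵥ v := by
  rw [Matrix.mulVec_mulVec, Matrix.dotProduct_mulVec, ← Matrix.vecMul_transpose,
    Matrix.vecMul_vecMul, ← Matrix.dotProduct_mulVec]
  congr 1
  rw [show Rᵀ * (R * M * Rᵀ * R) = Rᵀ * R * M * (Rᵀ * R) by noncomm_ring, hR']
  simp

lemma det_Rz (a : ℝ) : (Rz a).det = 1 := by
  simp [Rz, Matrix.det_fin_three]
  nlinarith [sin_sq_add_cos_sq a]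

lemma det_conj (R M : Matrix (Fin 3) (Fin 3) ℝ) (hdet : R.det = 1) :
    (R * M * Rᵀ).det = M.det := by
  rw [Matrix.det_mul, Matrix.det_mul, Matrix.det_transpose, hdet]
  ring

/-- Theorem 2 (axial symmetry): if κ ≡ 0 and the scalings γ₁, γ₂ are positive functions of
latitude only, then ρ_NS(s_i, s_j) = c(s_i, s_j) ρ(q(s_i, s_j)) depends on the longitudes
only through their difference l_i − l_j. -/
theorem axial_symmetry_of_latitude_scaling (γ₁ γ₂ : ℝ → ℝ)
    (h₁ : ∀ L ∈ Set.Icc (-(π / 2)) (π / 2), 0 < γ₁ L)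
    (h₂ : ∀ L ∈ Set.Icc (-(π / 2)) (π / 2), 0 < γ₂ L)
    (ρ : ℝ → ℝ) :
    ∃ ρA : ℝ → ℝ → ℝ → ℝ, ∀ l₁ l₂ : ℝ,
      ∀ L₁ ∈ Set.Icc (-(π / 2)) (π / 2), ∀ L₂ ∈ Set.Icc (-(π / 2)) (π / 2),
        cAx γ₁ γ₂ l₁ L₁ l₂ L₂ * ρ (qAx γ₁ γ₂ l₁ L₁ l₂ L₂) = ρA (l₁ - l₂) L₁ L₂ := by
  refine ⟨fun Δ L₁ L₂ => cAx γ₁ γ₂ Δ L₁ 0 L₂ * ρ (qAx γ₁ γ₂ Δ L₁ 0 L₂),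
    fun l₁ l₂ L₁ _ L₂ _ => ?_⟩
  set R := Rz l₂ with hRdef
  have hRR : R * Rᵀ = 1 := Rz_mul_transpose l₂
  have hRR' : Rᵀ * R = 1 := Rz_transpose_mul l₂
  have hS₁ : SigAx γ₁ γ₂ l₁ L₁ = R * SigAx γ₁ γ₂ (l₁ - l₂) L₁ * Rᵀ := SigAx_conj γ₁ γ₂ l₂ l₁ L₁
  have hS₂ : SigAx γ₁ γ₂ l₂ L₂ = R * SigAx γ₁ γ₂ 0 L₂ * Rᵀ := by
    have := SigAx_conj γ₁ γ₂ l₂ l₂ L₂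
    simpa using this
  have hsum : SigAx γ₁ γ₂ l₁ L₁ + SigAx γ₁ γ₂ l₂ L₂ =
      R * (SigAx γ₁ γ₂ (l₁ - l₂) L₁ + SigAx γ₁ γ₂ 0 L₂) * Rᵀ := by
    rw [hS₁, hS₂, Matrix.mul_add, Matrix.add_mul]
  have hv₁ : sVec l₁ L₁ = R *ᵥ sVec (l₁ - l₂) L₁ := by
    rw [hRdef, Rz_mulVec_sVec]; ring_nf
  have hv₂ : sVec l₂ L₂ = R *ᵥ sVec 0 L₂ := by
    rw [hRdef, Rz_mulVec_sVec]; ring_nf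
  have hq : qAx γ₁ γ₂ l₁ L₁ l₂ L₂ = qAx γ₁ γ₂ (l₁ - l₂) L₁ 0 L₂ := by
    unfold qAx
    rw [hsum, hv₁, hv₂, ← Matrix.mulVec_sub,
      conjInv3 _ _ hRR hRR', conj_quad _ _ _ hRR']
  have hc : cAx γ₁ γ₂ l₁ L₁ l₂ L₂ = cAx γ₁ γ₂ (l₁ - l₂) L₁ 0 L₂ := by
    unfold cAx
    rw [hS₁, hS₂, det_conj _ _ (det_Rz l₂), det_conj _ _ (det_Rz l₂),
      show R * SigAx γ₁ γ₂ (l₁ - l₂) L₁ * Rᵀ + R * SigAx γ₁ γ₂ 0 L₂ * Rᵀ =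
        R * (SigAx γ₁ γ₂ (l₁ - l₂) L₁ + SigAx γ₁ γ₂ 0 L₂) * Rᵀ by noncomm_ring,
      show (1 / 2 : ℝ) • (R * (SigAx γ₁ γ₂ (l₁ - l₂) L₁ + SigAx γ₁ γ₂ 0 L₂) * Rᵀ) =
        R * ((1 / 2 : ℝ) • (SigAx γ₁ γ₂ (l₁ - l₂) L₁ + SigAx γ₁ γ₂ 0 L₂)) * Rᵀ by
          rw [Matrix.mul_smul, Matrix.smul_mul],
      det_conj _ _ (det_Rz l₂)]
  rw [hq, hc]
end
end

section
/- For all angles l, L ∈ ℝ and all γ₁, γ₂ ∈ ℝ, with s̃ = (cos L cos l, cos L sin l, sin L) and s̃* = (cos l sin L, sin l sin L, cos L), the determinant det((1 − γ₁) s̃ s̃ᵀ + γ₁ I₃ + (γ₂ − γ₁) s̃* (s̃*)ᵀ) equals γ₁ γ₂ − 4 γ₁ (1 − γ₁)(γ₂ − γ₁) sin²L cos²L. In particular, the determinant of the axially symmetric anisotropy matrix depends on the point (l, L) only through its latitude L. -/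
open Matrix Real

noncomputable section

/-- The associated vector s̃* in the axially symmetric anisotropy decomposition. -/
def sStar (l L : ℝ) : Fin 3 → ℝ := ![cos l * sin L, sin l * sin L, cos L]

/-- det((1 − γ₁) s̃ s̃ᵀ + γ₁ I₃ + (γ₂ − γ₁) s̃* (s̃*)ᵀ)
= γ₁ γ₂ − 4 γ₁ (1 − γ₁)(γ₂ − γ₁) sin²L cos²L; in particular the determinant of the
axially symmetric anisotropy matrix depends on (l, L) only through the latitude L. -/
theorem det_axially_symmetric_anisotropy (l L γ₁ γ₂ : ℝ) :
    ((1 - γ₁) • vecMulVec (sVec l L) (sVec l L) + γ₁ • (1 : Matrix (Fin 3) (Fin 3) ℝ)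
        + (γ₂ - γ₁) • vecMulVec (sStar l L) (sStar l L)).det
      = γ₁ * γ₂ - 4 * γ₁ * (1 - γ₁) * (γ₂ - γ₁) * sin L ^ 2 * cos L ^ 2 := by

  have hl : sin l ^ 2 = 1 - cos l ^ 2 := by nlinarith [sin_sq_add_cos_sq l]
  have hL : sin L ^ 2 = 1 - cos L ^ 2 := by nlinarith [sin_sq_add_cos_sq L]
  have hL4 : sin L ^ 4 = (1 - cos L ^ 2) ^ 2 := by
    rw [show (4:ℕ) = 2*2 from rfl, pow_mul, hL]
  simp [det_fin_three, sVec, sStar, vecMulVec, Matrix.one_apply]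
  ring_nf
  rw [hl, hL, hL4]
  ring
end
end

section
/- Let s_i = (l_i, L_i) and s_j = (l_j, L_j) be points on the unit sphere with cos L_j ≠ 0, and let s̃_i = (cos L_i cos l_i, cos L_i sin l_i, sin L_i), s̃_j defined analogously, and s̃_j* = (cos l_j sin L_j, sin l_j sin L_j, cos L_j). Then s̃_iᵀ s̃_j* = tan(L_j) (s̃_iᵀ s̃_j) + sin(L_i)(cos L_j − sin²L_j / cos L_j). In particular, s̃_iᵀ s̃_j* depends only on the latitudes L_i, L_j and the inner product s̃_iᵀ s̃_j. -/
open Matrix Real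

noncomputable section

/-- If cos L_j ≠ 0, then s̃_iᵀ s̃_j* = tan(L_j)(s̃_iᵀ s̃_j) + sin(L_i)(cos L_j − sin²L_j / cos L_j);
in particular s̃_iᵀ s̃_j* depends only on the latitudes and the inner product s̃_iᵀ s̃_j. -/
theorem inner_sVec_sStar (l₁ L₁ l₂ L₂ : ℝ) (h₂ : cos L₂ ≠ 0) :
    sVec l₁ L₁ ⬝ᵥ sStar l₂ L₂
      = tan L₂ * (sVec l₁ L₁ ⬝ᵥ sVec l₂ L₂) + sin L₁ * (cos L₂ - sin L₂ ^ 2 / cos L₂) := by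
  simp only [sVec, sStar, dotProduct, Fin.sum_univ_three, Matrix.cons_val_zero,
    Matrix.cons_val_one, Matrix.head_cons, Matrix.cons_val_two, Matrix.tail_cons, tan_eq_sin_div_cos]
  field_simp
  ring
end
end

section
/- Let s_i = (l_i, L_i) and s_j = (l_j, L_j) be points on the unit sphere with cos L_i ≠ 0 and cos L_j ≠ 0, and let s̃_i, s̃_j, s̃_i*, s̃_j* be the associated vectors in ℝ³. Then (s̃_i*)ᵀ s̃_j* = tan(L_i) tan(L_j) (s̃_iᵀ s̃_j) + tan(L_i) sin(L_i)(cos L_j − sin²L_j / cos L_j) + tan(L_j) sin(L_j)(cos L_i − sin²L_i / cos L_i) + (cos L_i − sin²L_i / cos L_i)(cos L_j − sin²L_j / cos L_j). In particular, (s̃_i*)ᵀ s̃_j* depends only on the latitudes L_i, L_j and the inner product s̃_iᵀ s̃_j. -/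
open Matrix Real

noncomputable section

/-- If cos L_i ≠ 0 and cos L_j ≠ 0, then (s̃_i*)ᵀ s̃_j* equals
tan(L_i) tan(L_j)(s̃_iᵀ s̃_j) + tan(L_i) sin(L_i)(cos L_j − sin²L_j / cos L_j)
+ tan(L_j) sin(L_j)(cos L_i − sin²L_i / cos L_i)
+ (cos L_i − sin²L_i / cos L_i)(cos L_j − sin²L_j / cos L_j);
in particular it depends only on the latitudes and the inner product s̃_iᵀ s̃_j. -/
theorem inner_sStar_sStar (l₁ L₁ l₂ L₂ : ℝ) (hL₁ : cos L₁ ≠ 0) (hL₂ : cos L₂ ≠ 0) :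
    sStar l₁ L₁ ⬝ᵥ sStar l₂ L₂
      = tan L₁ * tan L₂ * (sVec l₁ L₁ ⬝ᵥ sVec l₂ L₂)
        + tan L₁ * sin L₁ * (cos L₂ - sin L₂ ^ 2 / cos L₂)
        + tan L₂ * sin L₂ * (cos L₁ - sin L₁ ^ 2 / cos L₁)
        + (cos L₁ - sin L₁ ^ 2 / cos L₁) * (cos L₂ - sin L₂ ^ 2 / cos L₂) := by
  have h₁ := sin_sq_add_cos_sq L₁
  have h₂ := sin_sq_add_cos_sq L₂
  simp only [sStar, sVec, dotProduct, Fin.sum_univ_three, Matrix.cons_val_zero,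
    Matrix.cons_val_one, Matrix.head_cons, Matrix.cons_val_two, Matrix.tail_cons,
    Real.tan_eq_sin_div_cos]
  field_simp
  nlinarith [sq_nonneg (sin L₁), sq_nonneg (sin L₂), sin_sq_add_cos_sq L₁, sin_sq_add_cos_sq L₂, mul_self_nonneg (cos L₁ * cos L₂)]
end
end
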